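/- For any traceless self-adjoint operator Δ on n qubits, ‖Δ‖_{W₁loc} ≤ Σ_{x∈[n]} max_{Λ∋x} ‖Tr_{Λᶜ}Δ‖₁ / (2|Λ| c_{|Λ|}) ≤ n · max_{∅≠Λ⊆[n]} ‖Tr_{Λᶜ}Δ‖₁ / (2|Λ| c_{|Λ|}). -/

import Mathlib

open Matrix BigOperators
open scoped ComplexOrder

noncomputable section

namespace QW1

variable {ι : Type*} [Fintype ι] [DecidableEq ι]

/-- The space of (not necessarily Hermitian) operators on a system of qubits labelled by `ι`:
matrices indexed by the computational basis `ι → Fin 2`. -/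
abbrev QMat (ι : Type*) [Fintype ι] [DecidableEq ι] :=
  Matrix (ι → Fin 2) (ι → Fin 2) ℂ

/-- The operator norm (largest singular value) of a matrix. -/
noncomputable def opNorm {d : Type*} [Fintype d] [DecidableEq d] (A : Matrix d d ℂ) : ℝ :=
  ⨆ i, Real.sqrt ((Matrix.isHermitian_conjTranspose_mul_self A).eigenvalues i)

/-- The trace norm (sum of singular values) of a matrix. -/
noncomputable def traceNorm {d : Type*} [Fintype d] [DecidableEq d] (A : Matrix d d ℂ) : ℝ :=
  ∑ i, Real.sqrt ((Matrix.isHermitian_conjTranspose_mul_self A).eigenvalues i)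

/-- Combine an assignment of basis states on `Λ` and on its complement into one on all of `ι`. -/
def merge (Λ : Finset ι) (f : {x // x ∈ Λ} → Fin 2) (g : {x // x ∉ Λ} → Fin 2) (x : ι) :
    Fin 2 :=
  if h : x ∈ Λ then f ⟨x, h⟩ else g ⟨x, h⟩

/-- The partial trace over the qubits outside `Λ`, `Tr_{Λᶜ}`, yielding an operator on the
qubits in `Λ`. -/
noncomputable def ptrace (Λ : Finset ι) (A : QMat ι) :
    Matrix ({x // x ∈ Λ} → Fin 2) ({x // x ∈ Λ} → Fin 2) ℂ :=
  fun f g => ∑ h : {x : ι // x ∉ Λ} → Fin 2, A (merge Λ f h) (merge Λ g h)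

/-- The extension `M ⊗ I_{Λᶜ}` of an operator `M` on the qubits in `Λ` to all the qubits. -/
def embed (Λ : Finset ι)
    (M : Matrix ({x // x ∈ Λ} → Fin 2) ({x // x ∈ Λ} → Fin 2) ℂ) : QMat ι :=
  fun f g =>
    (if ∀ x : ι, x ∉ Λ → f x = g x then
      M (fun x => f x.1) (fun x => g x.1) else 0)

/-- `H` acts on (at most) the qubits in `Λ`: it has the form `H_Λ ⊗ I_{Λᶜ}` with `H_Λ`
self-adjoint. -/
def ActsOn (Λ : Finset ι) (H : QMat ι) : Prop :=
  ∃ M, M.IsHermitian ∧ H = embed Λ M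

/-- The local quantum norm with penalty coefficients `c`. -/
noncomputable def localNorm (c : ℕ → ℝ) (H : QMat ι) : ℝ :=
  sInf { r : ℝ | ∃ F : Finset ι → QMat ι, (∀ Λ, ActsOn Λ (F Λ)) ∧ H = ∑ Λ, F Λ ∧
    r = 2 * ⨆ x : ι, ∑ Λ ∈ Finset.univ.filter (fun Λ : Finset ι => x ∈ Λ),
      c Λ.card * opNorm (F Λ) }

/-- The local quantum `W₁` norm: the dual of the local quantum norm. -/
noncomputable def W1loc (c : ℕ → ℝ) (Δ : QMat ι) : ℝ :=
  sSup { r : ℝ | ∃ H : QMat ι, H.IsHermitian ∧ localNorm c H ≤ 1 ∧ r = ((Δ * H).trace).re }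

/-- The quantum `W₁` norm of De Palma et al. -/
noncomputable def W1 (Δ : QMat ι) : ℝ :=
  sInf { r : ℝ | ∃ D : ι → QMat ι,
    (∀ x, (D x).IsHermitian ∧ (D x).trace = 0 ∧ ptrace ({x}ᶜ : Finset ι) (D x) = 0) ∧
    Δ = ∑ x, D x ∧ r = (1 / 2) * ∑ x, traceNorm (D x) }

/-- Tensor product of operators on two disjoint families of qubits. -/
def tensor {κ : Type*} [Fintype κ] [DecidableEq κ] (A : QMat ι) (B : QMat κ) :
    QMat (ι ⊕ κ) :=
  fun f g => A (f ∘ Sum.inl) (g ∘ Sum.inl) * B (f ∘ Sum.inr) (g ∘ Sum.inr)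

/-- Tensor product of single-qubit operators, one for each qubit. -/
def tensorAll (B : ι → Matrix (Fin 2) (Fin 2) ℂ) : QMat ι :=
  fun f g => ∏ j, B j (f j) (g j)

/-- The four Pauli matrices `I, X, Y, Z`. -/
noncomputable def pauli : Fin 4 → Matrix (Fin 2) (Fin 2) ℂ :=
  ![1, !![0, 1; 1, 0], !![0, -Complex.I; Complex.I, 0], !![1, 0; 0, -1]]

/-- The Pauli operator `σ_{a 1} ⊗ ⋯ ⊗ σ_{a n}`. -/
noncomputable def pauliOp (a : ι → Fin 4) : QMat ι :=
  tensorAll fun j => pauli (a j)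

/-- The weight (locality) of a Pauli operator: the number of non-identity factors. -/
def weight (a : ι → Fin 4) : ℕ :=
  (Finset.univ.filter fun j => a j ≠ 0).card

/-- A quantum state: a positive semidefinite matrix of unit trace. (`PosSemidef` is taken with
respect to the complex order.) -/
def IsState (ρ : QMat ι) : Prop :=
  ρ.PosSemidef ∧ ρ.trace = 1

end QW1

namespace QW1

variable {ι : Type*} [Fintype ι] [DecidableEq ι]

/-- The dependence `∂_x H` of the observable `H` on the qubit `x`. -/
noncomputable def dep (x : ι) (H : QMat ι) : ℝ :=
  2 * sInf { r : ℝ | ∃ K : QMat ι, ActsOn ({x}ᶜ : Finset ι) K ∧ r = opNorm (H - K) }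

/-- The quantum Lipschitz constant `‖H‖_L = max_x ∂_x H`. -/
noncomputable def lipNorm (H : QMat ι) : ℝ :=
  ⨆ x : ι, dep x H

/-- Single-qubit unitaries rotating the eigenbases of the Paulis `Z`, `X`, `Y`
to the computational basis. -/
noncomputable def ubasis : Fin 3 → Matrix (Fin 2) (Fin 2) ℂ :=
  ![1,
    (Real.sqrt 2 : ℂ)⁻¹ • !![1, 1; 1, -1],
    (Real.sqrt 2 : ℂ)⁻¹ • !![1, -Complex.I; 1, Complex.I]]

/-- The single-qubit classical shadow `3 U† |b⟩⟨b| U − I`. -/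
noncomputable def shadow1 (w : Fin 3) (b : Fin 2) : Matrix (Fin 2) (Fin 2) ℂ :=
  (3 : ℂ) • ((ubasis w)ᴴ * Matrix.single b b 1 * ubasis w) - 1

/-- The classical shadow `⊗_j (3 U_j† |b_j⟩⟨b_j| U_j − I)` of the Pauli measurement
primitive associated with the sampled basis choices and outcomes `s`. -/
noncomputable def shadowOf (s : ι → Fin 3 × Fin 2) : QMat ι :=
  tensorAll fun j => shadow1 (s j).1 (s j).2

/-- The probability of the sample `s` (a uniformly random Pauli basis measured on each qubit,
with outcomes distributed with the Born probability `⟨b|UρU†|b⟩`) when measuring one copy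
of `ρ` in the Pauli measurement primitive. -/
noncomputable def shadowPMF (ρ : QMat ι) (s : ι → Fin 3 × Fin 2) : ℝ :=
  ((3 : ℝ) ^ Fintype.card ι)⁻¹ *
    (((tensorAll fun j => ubasis (s j).1) * ρ * (tensorAll fun j => ubasis (s j).1)ᴴ)
      (fun j => (s j).2) (fun j => (s j).2)).re

open Classical in
/-- The probability that `N` independent classical shadows of `ρ` (from the Pauli
measurement primitive) satisfy the event `E`. -/
noncomputable def shadowProb (ρ : QMat ι) (N : ℕ)
    (E : (Fin N → ι → Fin 3 × Fin 2) → Prop) : ℝ :=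
  ∑ ω : Fin N → ι → Fin 3 × Fin 2, if E ω then ∏ i, shadowPMF ρ (ω i) else 0

/-- Extension of a single-qubit operator `K` on the qubit `i`, acting as the identity on the
remaining qubits. -/
noncomputable def oneSite (i : ι) (K : Matrix (Fin 2) (Fin 2) ℂ) : QMat ι :=
  tensorAll fun j => if j = i then K else 1

/-- Logarithm of a Hermitian matrix via its spectral decomposition (junk value otherwise). -/
noncomputable def mlog {d : Type*} [Fintype d] [DecidableEq d] (A : Matrix d d ℂ) :
    Matrix d d ℂ :=
  if hA : A.IsHermitian then
    (hA.eigenvectorUnitary : Matrix d d ℂ) *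
      Matrix.diagonal (fun i => (Real.log (hA.eigenvalues i) : ℂ)) *
      star (hA.eigenvectorUnitary : Matrix d d ℂ)
  else 0

/-- The quantum relative entropy `S(ρ‖σ) = Tr[ρ(ln ρ − ln σ)]`. -/
noncomputable def relEnt (ρ σ : QMat ι) : ℝ :=
  ((ρ * (mlog ρ - mlog σ)).trace).re

/-- The Gibbs state `e^{−H} / Tr e^{−H}`. -/
noncomputable def gibbs (H : QMat ι) : QMat ι :=
  ((NormedSpace.exp (-H)).trace)⁻¹ • NormedSpace.exp (-H)

end QW1

/-! If `H = ∑_Λ M_Λ ⊗ I_{Λᶜ}`, then `Tr[ΔH] = ∑_Λ Tr[Tr_{Λᶜ}Δ · M_Λ] ≤ ∑_Λ ‖Tr_{Λᶜ}Δ‖₁ ‖M_Λ‖_∞`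
by Hölder's inequality, and `‖M_Λ‖_∞ ≤ ‖M_Λ ⊗ I‖_∞`. Split `‖Tr_{Λᶜ}Δ‖₁` evenly among the `|Λ|`
sites of `Λ`: the share of a site `x ∈ Λ` is at most `2 c_{|Λ|} s_x`, where
`s_x = max_{Λ' ∋ x} ‖Tr_{Λ'ᶜ}Δ‖₁ / (2|Λ'| c_{|Λ'|})`. Regrouping by sites gives
`Tr[ΔH] ≤ ∑_x 2 s_x ∑_{Λ ∋ x} c_{|Λ|} ‖H_Λ‖_∞ ≤ (∑_x s_x) · r` for the cost `r` of the
decomposition; the term `Λ = ∅` vanishes because `Tr Δ = 0`. The second inequality holds site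
by site. -/

namespace QW1

open scoped Matrix.Norms.L2Operator MatrixOrder

section Spectral

variable {d : Type*} [Fintype d] [DecidableEq d] {𝕜 : Type*} [RCLike 𝕜]

lemma opNorm_nonneg (A : Matrix d d ℂ) : 0 ≤ opNorm A :=
  Real.iSup_nonneg fun _ => Real.sqrt_nonneg _

lemma traceNorm_nonneg (A : Matrix d d ℂ) : 0 ≤ traceNorm A :=
  Finset.sum_nonneg fun _ _ => Real.sqrt_nonneg _

lemma eigenvalues_conjTranspose_mul_self_le (A : Matrix d d ℂ) (i : d) :
    (isHermitian_conjTranspose_mul_self A).eigenvalues i ≤ opNorm A ^ 2 := by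
  rw [← Real.sqrt_le_left (opNorm_nonneg A)]
  exact le_ciSup (f := fun j => √((isHermitian_conjTranspose_mul_self A).eigenvalues j))
    (Set.finite_range _).bddAbove i

/-- `‖A‖² = ‖Aᴴ A‖`, and the norm of the positive matrix `Aᴴ A` is its largest eigenvalue. -/
lemma l2_opNorm_le_opNorm (A : Matrix d d ℂ) : ‖A‖ ≤ opNorm A := by
  have hsq : ‖Aᴴ * A‖ ≤ opNorm A ^ 2 := by
    rw [CStarAlgebra.norm_le_iff_le_algebraMap _ (sq_nonneg _)
      (posSemidef_conjTranspose_mul_self A).nonneg]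
    refine le_algebraMap_of_spectrum_le ?_ (isHermitian_conjTranspose_mul_self A).isSelfAdjoint
    rw [(isHermitian_conjTranspose_mul_self A).spectrum_real_eq_range_eigenvalues]
    rintro _ ⟨i, rfl⟩
    exact eigenvalues_conjTranspose_mul_self_le A i
  rw [l2_opNorm_conjTranspose_mul_self, ← sq] at hsq
  exact (pow_le_pow_iff_left₀ (norm_nonneg _) (opNorm_nonneg _) two_ne_zero).mp hsq

lemma norm_apply_le_l2_opNorm (M : Matrix d d 𝕜) (i j : d) : ‖M i j‖ ≤ ‖M‖ :=
  calc ‖M i j‖ = ‖toEuclideanCLM (n := d) (𝕜 := 𝕜) M (EuclideanSpace.single j 1) i‖ := by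
        simp [mulVec_single]
    _ ≤ ‖toEuclideanCLM (n := d) (𝕜 := 𝕜) M (EuclideanSpace.single j 1)‖ :=
        PiLp.norm_apply_le _ _
    _ ≤ ‖M‖ * ‖EuclideanSpace.single j (1 : 𝕜)‖ := ContinuousLinearMap.le_opNorm _ _
    _ = ‖M‖ := by simp

lemma trace_cfc {A : Matrix d d 𝕜} (hA : A.IsHermitian) (f : ℝ → ℝ) :
    (cfc f A).trace = ∑ i, (f (hA.eigenvalues i) : 𝕜) := by
  rw [hA.cfc_eq, IsHermitian.cfc, Unitary.conjStarAlgAut_apply, trace_mul_cycle,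
    Unitary.coe_star_mul_self, one_mul, trace_diagonal]
  rfl

/-- `√(AᴴA) = √(A²) = |A|` through the functional calculus of `A`. -/
lemma traceNorm_eq_sum_abs_eigenvalues {A : Matrix d d ℂ} (hA : A.IsHermitian) :
    traceNorm A = ∑ i, |hA.eigenvalues i| := by
  have hsq : Aᴴ * A = cfc (· ^ 2 : ℝ → ℝ) A := by
    rw [cfc_pow_id A 2 hA.isSelfAdjoint, hA.eq, sq]
  suffices (traceNorm A : ℂ) = ∑ i, ((|hA.eigenvalues i| : ℝ) : ℂ) by exact_mod_cast this
  calc (traceNorm A : ℂ) = (cfc Real.sqrt (Aᴴ * A)).trace := by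
        rw [trace_cfc (isHermitian_conjTranspose_mul_self A), traceNorm, Complex.ofReal_sum,
          RCLike.ofReal_eq_complex_ofReal]
    _ = (cfc (fun x => √(x ^ 2)) A).trace := by
        rw [hsq, ← cfc_comp' Real.sqrt (· ^ 2 : ℝ → ℝ) A]
    _ = ∑ i, ((|hA.eigenvalues i| : ℝ) : ℂ) := by
        simp only [trace_cfc hA, Real.sqrt_sq_eq_abs, RCLike.ofReal_eq_complex_ofReal]

lemma trace_mul_eq_sum_eigenvalues {A : Matrix d d 𝕜} (hA : A.IsHermitian) (B : Matrix d d 𝕜) :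
    (A * B).trace = ∑ i, (hA.eigenvalues i : 𝕜) *
      (star (hA.eigenvectorUnitary : Matrix d d 𝕜) * B *
        (hA.eigenvectorUnitary : Matrix d d 𝕜)) i i := by
  conv_lhs => rw [hA.spectral_theorem, Unitary.conjStarAlgAut_apply]
  rw [mul_assoc, mul_assoc, trace_mul_comm, mul_assoc]
  simp [trace, diagonal_mul]

lemma re_trace_mul_le_traceNorm_mul {A : Matrix d d ℂ} (hA : A.IsHermitian) (B : Matrix d d ℂ) :
    (A * B).trace.re ≤ traceNorm A * ‖B‖ := by
  set U : Matrix d d ℂ := (hA.eigenvectorUnitary : Matrix d d ℂ)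
  have hU : U ∈ unitary (Matrix d d ℂ) := hA.eigenvectorUnitary.2
  have hconj : ‖star U * B * U‖ = ‖B‖ := by
    rw [CStarRing.norm_mul_mem_unitary _ hU,
      CStarRing.norm_mem_unitary_mul _ (Unitary.star_mem hU)]
  rw [trace_mul_eq_sum_eigenvalues hA, Complex.re_sum, traceNorm_eq_sum_abs_eigenvalues hA,
    Finset.sum_mul]
  gcongr with i
  rw [RCLike.ofReal_eq_complex_ofReal, Complex.re_ofReal_mul]
  calc hA.eigenvalues i * ((star U * B * U) i i).re
      ≤ |hA.eigenvalues i| * |((star U * B * U) i i).re| := by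
        rw [← abs_mul]
        exact le_abs_self _
    _ ≤ |hA.eigenvalues i| * ‖B‖ := by
        gcongr
        exact (Complex.abs_re_le_norm _).trans (hconj ▸ norm_apply_le_l2_opNorm _ i i)

end Spectral

section Merge

variable {ι : Type*} [DecidableEq ι]

def splitEquiv (Λ : Finset ι) :
    (ι → Fin 2) ≃ (({x // x ∈ Λ} → Fin 2) × ({x // x ∉ Λ} → Fin 2)) :=
  Equiv.piEquivPiSubtypeProd (· ∈ Λ) fun _ => Fin 2

lemma splitEquiv_symm_apply (Λ : Finset ι) (a : {x // x ∈ Λ} → Fin 2)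
    (h : {x // x ∉ Λ} → Fin 2) : (splitEquiv Λ).symm (a, h) = merge Λ a h :=
  rfl

lemma restrict_merge (Λ : Finset ι) (a : {x // x ∈ Λ} → Fin 2) (h : {x // x ∉ Λ} → Fin 2) :
    (fun x : {x // x ∈ Λ} => merge Λ a h x) = a :=
  congrArg Prod.fst ((splitEquiv Λ).apply_symm_apply (a, h))

lemma merge_eqOn_compl_iff (Λ : Finset ι) (a b : {x // x ∈ Λ} → Fin 2)
    (h h' : {x // x ∉ Λ} → Fin 2) :
    (∀ x, x ∉ Λ → merge Λ a h x = merge Λ b h' x) ↔ h = h' := by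
  refine ⟨fun hab => funext fun y => ?_, fun hh x hx => by simp [merge, hx, hh]⟩
  simpa [merge, y.2] using hab y y.2

end Merge

section Qubits

variable {ι : Type*} [Fintype ι] [DecidableEq ι]

lemma sum_eq_sum_merge {M : Type*} [AddCommMonoid M] (Λ : Finset ι) (F : (ι → Fin 2) → M) :
    ∑ f, F f = ∑ a, ∑ h, F (merge Λ a h) := by
  rw [← (splitEquiv Λ).symm.sum_comp, Fintype.sum_prod_type]
  rfl

lemma embed_apply_merge (Λ : Finset ι)
    (M : Matrix ({x // x ∈ Λ} → Fin 2) ({x // x ∈ Λ} → Fin 2) ℂ)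
    (a b : {x // x ∈ Λ} → Fin 2) (h h' : {x // x ∉ Λ} → Fin 2) :
    embed Λ M (merge Λ a h) (merge Λ b h') = if h = h' then M a b else 0 := by
  simp only [embed, merge_eqOn_compl_iff, restrict_merge]

lemma trace_mul_embed (Λ : Finset ι) (Δ : QMat ι)
    (M : Matrix ({x // x ∈ Λ} → Fin 2) ({x // x ∈ Λ} → Fin 2) ℂ) :
    (Δ * embed Λ M).trace = (ptrace Λ Δ * M).trace := by
  simp only [trace, diag, mul_apply, ptrace, Finset.sum_mul]
  simp_rw [sum_eq_sum_merge Λ, embed_apply_merge, mul_ite, mul_zero, Finset.sum_ite_eq',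
    Finset.mem_univ, if_true]
  exact Finset.sum_congr rfl fun a _ => Finset.sum_comm

lemma ptrace_isHermitian (Λ : Finset ι) {Δ : QMat ι} (hΔ : Δ.IsHermitian) :
    (ptrace Λ Δ).IsHermitian := by
  ext a b
  simp only [conjTranspose_apply, ptrace, star_sum]
  exact Finset.sum_congr rfl fun h _ => hΔ.apply _ _

lemma ptrace_empty_apply (Δ : QMat ι) (a b : {x // x ∈ (∅ : Finset ι)} → Fin 2) :
    ptrace ∅ Δ a b = Δ.trace := by
  rw [Subsingleton.elim b a, trace, sum_eq_sum_merge ∅, Fintype.sum_unique]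
  rfl

/-- `v ⊗ |0⋯0⟩`: the vector `v` on the qubits of `Λ`, with all the other qubits in state `0`. -/
def liftVec (Λ : Finset ι) (v : ({x // x ∈ Λ} → Fin 2) → ℂ) : (ι → Fin 2) → ℂ :=
  fun f => if (splitEquiv Λ f).2 = 0 then v (splitEquiv Λ f).1 else 0

lemma liftVec_merge (Λ : Finset ι) (v : ({x // x ∈ Λ} → Fin 2) → ℂ)
    (a : {x // x ∈ Λ} → Fin 2) (h : {x // x ∉ Λ} → Fin 2) :
    liftVec Λ v (merge Λ a h) = if h = 0 then v a else 0 := by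
  simp [liftVec, ← splitEquiv_symm_apply]

lemma embed_mulVec_liftVec (Λ : Finset ι)
    (M : Matrix ({x // x ∈ Λ} → Fin 2) ({x // x ∈ Λ} → Fin 2) ℂ)
    (v : ({x // x ∈ Λ} → Fin 2) → ℂ) :
    embed Λ M *ᵥ liftVec Λ v = liftVec Λ (M *ᵥ v) := by
  funext f
  obtain ⟨⟨a, h⟩, rfl⟩ := (splitEquiv Λ).symm.surjective f
  simp only [splitEquiv_symm_apply, mulVec, dotProduct, sum_eq_sum_merge Λ, embed_apply_merge,
    liftVec_merge, ite_mul, zero_mul, Finset.sum_ite_eq, Finset.mem_univ, if_true]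
  split_ifs <;> simp

lemma norm_toLp_liftVec (Λ : Finset ι) (v : ({x // x ∈ Λ} → Fin 2) → ℂ) :
    ‖WithLp.toLp 2 (liftVec Λ v)‖ = ‖WithLp.toLp 2 v‖ := by
  simp only [EuclideanSpace.norm_eq, sum_eq_sum_merge Λ, liftVec_merge, apply_ite (‖·‖ ^ 2),
    norm_zero, ne_eq, OfNat.ofNat_ne_zero, not_false_eq_true, zero_pow, Finset.sum_ite_eq',
    Finset.mem_univ, if_true]

lemma l2_opNorm_le_embed (Λ : Finset ι)
    (M : Matrix ({x // x ∈ Λ} → Fin 2) ({x // x ∈ Λ} → Fin 2) ℂ) :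
    ‖M‖ ≤ ‖embed Λ M‖ := by
  refine ContinuousLinearMap.opNorm_le_bound _ (norm_nonneg _) fun v => ?_
  calc ‖toEuclideanCLM (n := {x // x ∈ Λ} → Fin 2) (𝕜 := ℂ) M v‖
      = ‖toEuclideanCLM (n := ι → Fin 2) (𝕜 := ℂ) (embed Λ M) (WithLp.toLp 2 (liftVec Λ v))‖ := by
        rw [toEuclideanCLM_toLp, toEuclideanCLM_toLp, embed_mulVec_liftVec, norm_toLp_liftVec]
    _ ≤ ‖embed Λ M‖ * ‖WithLp.toLp 2 (liftVec Λ v)‖ := ContinuousLinearMap.le_opNorm _ _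
    _ = ‖embed Λ M‖ * ‖v‖ := by rw [norm_toLp_liftVec]

lemma exists_actsOn_sum_eq {H : QMat ι} (hH : H.IsHermitian) :
    ∃ F : Finset ι → QMat ι, (∀ Λ, ActsOn Λ (F Λ)) ∧ H = ∑ Λ, F Λ := by
  refine ⟨fun Λ => if Λ = Finset.univ then H else 0, fun Λ => ?_, by simp⟩
  dsimp only
  split_ifs with hΛ
  · subst hΛ
    refine ⟨H.submatrix (fun a x => a ⟨x, Finset.mem_univ x⟩) (fun a x => a ⟨x, Finset.mem_univ x⟩),
      hH.submatrix _, ?_⟩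
    ext f g
    simp [embed]
  · exact ⟨0, isHermitian_zero, by ext; simp [embed]⟩

lemma re_trace_mul_le_of_actsOn {Δ F : QMat ι} {Λ : Finset ι} (hΔ : Δ.IsHermitian)
    (hF : ActsOn Λ F) : (Δ * F).trace.re ≤ traceNorm (ptrace Λ Δ) * opNorm F := by
  obtain ⟨M, -, rfl⟩ := hF
  rw [trace_mul_embed]
  calc _ ≤ traceNorm (ptrace Λ Δ) * ‖M‖ :=
        re_trace_mul_le_traceNorm_mul (ptrace_isHermitian Λ hΔ) M
    _ ≤ traceNorm (ptrace Λ Δ) * opNorm (embed Λ M) := by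
        gcongr
        · exact traceNorm_nonneg _
        · exact (l2_opNorm_le_embed Λ M).trans (l2_opNorm_le_opNorm _)

lemma trace_mul_eq_zero_of_actsOn_empty {Δ F : QMat ι} (hΔ : Δ.trace = 0) (hF : ActsOn ∅ F) :
    (Δ * F).trace = 0 := by
  obtain ⟨M, -, rfl⟩ := hF
  have : ptrace ∅ Δ = 0 := by
    ext a b
    rw [ptrace_empty_apply, hΔ, Matrix.zero_apply]
  rw [trace_mul_embed, this, zero_mul, trace_zero]

def localRatio (c : ℕ → ℝ) (Δ : QMat ι) (Λ : Finset ι) : ℝ :=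
  traceNorm (ptrace Λ Δ) / (2 * Λ.card * c Λ.card)

def siteWeight (c : ℕ → ℝ) (Δ : QMat ι) (x : ι) : ℝ :=
  ⨆ Λ : {Λ : Finset ι // x ∈ Λ}, localRatio c Δ Λ

variable {c : ℕ → ℝ} {Δ : QMat ι}

lemma localRatio_le_siteWeight {x : ι} {Λ : Finset ι} (hx : x ∈ Λ) :
    localRatio c Δ Λ ≤ siteWeight c Δ x :=
  le_ciSup (f := fun Λ : {Λ : Finset ι // x ∈ Λ} => localRatio c Δ Λ)
    (Set.finite_range _).bddAbove ⟨Λ, hx⟩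

lemma siteWeight_nonneg (hc : ∀ Λ : Finset ι, Λ.Nonempty → 0 < c Λ.card) (x : ι) :
    0 ≤ siteWeight c Δ x := by
  refine le_trans ?_ (localRatio_le_siteWeight (Finset.mem_singleton_self x))
  have := hc {x} (Finset.singleton_nonempty x)
  exact div_nonneg (traceNorm_nonneg _) (by positivity)

lemma siteWeight_le_iSup_localRatio (x : ι) :
    siteWeight c Δ x ≤ ⨆ Λ : {Λ : Finset ι // Λ.Nonempty}, localRatio c Δ Λ := by
  have : Nonempty {Λ : Finset ι // x ∈ Λ} := ⟨⟨{x}, Finset.mem_singleton_self x⟩⟩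
  exact ciSup_le fun Λ => le_ciSup (f := fun Λ : {Λ : Finset ι // Λ.Nonempty} => localRatio c Δ Λ)
    (Set.finite_range _).bddAbove ⟨Λ.1, x, Λ.2⟩

lemma re_trace_mul_le_sum_siteWeight (hc : ∀ Λ : Finset ι, Λ.Nonempty → 0 < c Λ.card)
    (hΔ : Δ.IsHermitian) (hΔtr : Δ.trace = 0) {Λ : Finset ι} {F : QMat ι} (hF : ActsOn Λ F) :
    (Δ * F).trace.re ≤ ∑ x ∈ Λ, 2 * c Λ.card * siteWeight c Δ x * opNorm F := by
  rcases Λ.eq_empty_or_nonempty with rfl | hΛ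
  · simp [trace_mul_eq_zero_of_actsOn_empty hΔtr hF]
  have hcΛ := hc Λ hΛ
  have hcard : (0 : ℝ) < Λ.card := by exact_mod_cast hΛ.card_pos
  calc (Δ * F).trace.re ≤ traceNorm (ptrace Λ Δ) * opNorm F := re_trace_mul_le_of_actsOn hΔ hF
    _ = ∑ x ∈ Λ, 2 * c Λ.card * localRatio c Δ Λ * opNorm F := by
        rw [Finset.sum_const, nsmul_eq_mul, localRatio]
        field_simp
    _ ≤ ∑ x ∈ Λ, 2 * c Λ.card * siteWeight c Δ x * opNorm F := by
        gcongr with x hx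
        · exact opNorm_nonneg F
        · exact localRatio_le_siteWeight hx

lemma re_trace_mul_sum_le (hc : ∀ Λ : Finset ι, Λ.Nonempty → 0 < c Λ.card)
    (hΔ : Δ.IsHermitian) (hΔtr : Δ.trace = 0) {F : Finset ι → QMat ι}
    (hF : ∀ Λ, ActsOn Λ (F Λ)) :
    (Δ * ∑ Λ, F Λ).trace.re ≤ (∑ x, siteWeight c Δ x) *
      (2 * ⨆ x : ι, ∑ Λ ∈ Finset.univ.filter (fun Λ : Finset ι => x ∈ Λ),
        c Λ.card * opNorm (F Λ)) := by
  set R := ⨆ x : ι, ∑ Λ ∈ Finset.univ.filter (fun Λ : Finset ι => x ∈ Λ),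
    c Λ.card * opNorm (F Λ)
  calc (Δ * ∑ Λ, F Λ).trace.re = ∑ Λ, (Δ * F Λ).trace.re := by
        rw [Finset.mul_sum, trace_sum, Complex.re_sum]
    _ ≤ ∑ Λ, ∑ x ∈ Λ, 2 * c Λ.card * siteWeight c Δ x * opNorm (F Λ) :=
        Finset.sum_le_sum fun Λ _ => re_trace_mul_le_sum_siteWeight hc hΔ hΔtr (hF Λ)
    _ = ∑ x, 2 * siteWeight c Δ x * ∑ Λ ∈ Finset.univ.filter (fun Λ : Finset ι => x ∈ Λ),
          c Λ.card * opNorm (F Λ) := by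
        rw [Finset.sum_comm' (t' := Finset.univ)
          (s' := fun x => Finset.univ.filter (fun Λ : Finset ι => x ∈ Λ)) (by simp)]
        simp only [Finset.mul_sum]
        exact Finset.sum_congr rfl fun _ _ => Finset.sum_congr rfl fun _ _ => by ring
    _ ≤ ∑ x, 2 * siteWeight c Δ x * R := by
        gcongr with x
        · exact mul_nonneg zero_le_two (siteWeight_nonneg hc x)
        · exact le_ciSup (f := fun x : ι => ∑ Λ ∈ Finset.univ.filter (fun Λ : Finset ι => x ∈ Λ),
            c Λ.card * opNorm (F Λ)) (Set.finite_range _).bddAbove x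
    _ = (∑ x, siteWeight c Δ x) * (2 * R) := by
        rw [Finset.sum_mul]
        exact Finset.sum_congr rfl fun _ _ => by ring

lemma re_trace_mul_le_mul_localNorm (hc : ∀ Λ : Finset ι, Λ.Nonempty → 0 < c Λ.card)
    (hΔ : Δ.IsHermitian) (hΔtr : Δ.trace = 0) {H : QMat ι} (hH : H.IsHermitian) :
    (Δ * H).trace.re ≤ (∑ x, siteWeight c Δ x) * localNorm c H := by
  have hS : 0 ≤ ∑ x, siteWeight c Δ x := Finset.sum_nonneg fun x _ => siteWeight_nonneg hc x
  obtain ⟨F₀, hF₀, hH₀⟩ := exists_actsOn_sum_eq hH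
  rw [localNorm, ← smul_eq_mul (a := ∑ x, siteWeight c Δ x), ← Real.sInf_smul_of_nonneg hS]
  refine le_csInf (Set.Nonempty.smul_set ⟨_, F₀, hF₀, hH₀, rfl⟩) ?_
  rintro _ ⟨_, ⟨F, hF, rfl, rfl⟩, rfl⟩
  exact re_trace_mul_sum_le hc hΔ hΔtr hF

theorem W1loc_le_sum_siteWeight (hc : ∀ Λ : Finset ι, Λ.Nonempty → 0 < c Λ.card)
    (hΔ : Δ.IsHermitian) (hΔtr : Δ.trace = 0) :
    W1loc c Δ ≤ ∑ x, siteWeight c Δ x := by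
  have hS : 0 ≤ ∑ x, siteWeight c Δ x := Finset.sum_nonneg fun x _ => siteWeight_nonneg hc x
  refine Real.sSup_le ?_ hS
  rintro _ ⟨H, hH, hloc, rfl⟩
  exact (re_trace_mul_le_mul_localNorm hc hΔ hΔtr hH).trans (mul_le_of_le_one_right hS hloc)

theorem sum_siteWeight_le (c : ℕ → ℝ) (Δ : QMat ι) :
    ∑ x, siteWeight c Δ x ≤
      Fintype.card ι * ⨆ Λ : {Λ : Finset ι // Λ.Nonempty}, localRatio c Δ Λ := by
  rw [← nsmul_eq_mul, ← Finset.card_univ, ← Finset.sum_const]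
  exact Finset.sum_le_sum fun x _ => siteWeight_le_iSup_localRatio x

end Qubits

end QW1

open QW1 Matrix Complex

/-- `‖Δ‖_{W₁loc} ≤ Σ_x max_{Λ∋x} ‖Tr_{Λᶜ}Δ‖₁/(2|Λ| c_{|Λ|})
≤ n · max_{∅≠Λ⊆[n]} ‖Tr_{Λᶜ}Δ‖₁/(2|Λ| c_{|Λ|})`. -/
theorem stmt3 {n : ℕ} (c : ℕ → ℝ) (hc1 : c 1 = 1)
    (hcmono : ∀ k l, 1 ≤ k → k ≤ l → l ≤ n → c k ≤ c l)
    (Δ : QMat (Fin n)) (hΔ : Δ.IsHermitian) (hΔtr : Δ.trace = 0) :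
    W1loc c Δ ≤ (∑ x : Fin n, ⨆ Λ : {Λ : Finset (Fin n) // x ∈ Λ},
        traceNorm (ptrace Λ.1 Δ) / (2 * Λ.1.card * c Λ.1.card)) ∧
    (∑ x : Fin n, ⨆ Λ : {Λ : Finset (Fin n) // x ∈ Λ},
        traceNorm (ptrace Λ.1 Δ) / (2 * Λ.1.card * c Λ.1.card)) ≤
      n * ⨆ Λ : {Λ : Finset (Fin n) // Λ.Nonempty},
        traceNorm (ptrace Λ.1 Δ) / (2 * Λ.1.card * c Λ.1.card) := by
  have hc : ∀ Λ : Finset (Fin n), Λ.Nonempty → 0 < c Λ.card := fun Λ hΛ => by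
    have := hcmono 1 Λ.card le_rfl hΛ.card_pos (by simpa using Λ.card_le_univ)
    linarith
  refine ⟨W1loc_le_sum_siteWeight hc hΔ hΔtr, ?_⟩
  have h := sum_siteWeight_le c Δ
  rw [Fintype.card_fin] at h
  exact h
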